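/- arXiv:1203.4481 — 4 statements merged into one kernel-verified Lean document; each statement's English description precedes it below -/
import Mathlib

section
/- Let A : ℝ^{m×n} → ℝ^p be a linear operator satisfying the rank restricted isometry property with constant δ_k ∈ (0,1), i.e., (1−δ_k)‖X‖_F² ≤ ‖A(X)‖₂² ≤ (1+δ_k)‖X‖_F² for all X with rank(X) ≤ k. Let S be a set of orthonormal rank-1 matrices such that rank(P_S X) ≤ k for all X, where P_S denotes orthogonal projection onto span(S). Then for every v ∈ ℝ^p, ‖P_S(A*(v))‖_F ≤ √(1+δ_k) ‖v‖₂. -/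
open scoped BigOperators RealInnerProductSpace

noncomputable def frobInner {m n : ℕ} (X Y : Matrix (Fin m) (Fin n) ℝ) : ℝ :=
  ∑ i, ∑ j, X i j * Y i j

noncomputable def frobNorm {m n : ℕ} (X : Matrix (Fin m) (Fin n) ℝ) : ℝ :=
  Real.sqrt (frobInner X X)

/-
Proof idea. Put `Z = P_S (A* v)`. Since `P_S` is a self-adjoint idempotent,
`‖Z‖_F² = ⟨Z, A* v⟩ = ⟨A Z, v⟩ ≤ ‖A Z‖ ‖v‖`, and `Z` has rank at most `k`, so the upper RIP
bound gives `‖A Z‖ ≤ √(1+δ) ‖Z‖_F`. Dividing by `‖Z‖_F` yields the claim.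
-/

theorem le_of_sq_le_mul {a c : ℝ} (ha : 0 ≤ a) (hc : 0 ≤ c) (h : a ^ 2 ≤ c * a) : a ≤ c := by
  rcases ha.eq_or_lt with rfl | ha
  · exact hc
  · nlinarith

theorem le_sqrt_mul_of_sq_le {x c r : ℝ} (hr : 0 ≤ r) (h : x ^ 2 ≤ c * r ^ 2) :
    x ≤ Real.sqrt c * r :=
  calc x ≤ Real.sqrt (c * r ^ 2) := Real.le_sqrt_of_sq_le h
    _ = Real.sqrt c * r := by rw [Real.sqrt_mul' c (sq_nonneg r), Real.sqrt_sq hr]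

section Frobenius

variable {m n : ℕ}

theorem frobInner_comm (X Y : Matrix (Fin m) (Fin n) ℝ) : frobInner X Y = frobInner Y X := by
  simp only [frobInner, mul_comm]

theorem frobInner_self_nonneg (X : Matrix (Fin m) (Fin n) ℝ) : 0 ≤ frobInner X X :=
  Finset.sum_nonneg fun i _ => Finset.sum_nonneg fun j _ => mul_self_nonneg (X i j)

theorem frobNorm_nonneg (X : Matrix (Fin m) (Fin n) ℝ) : 0 ≤ frobNorm X :=
  Real.sqrt_nonneg _

theorem frobNorm_sq (X : Matrix (Fin m) (Fin n) ℝ) : frobNorm X ^ 2 = frobInner X X :=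
  Real.sq_sqrt (frobInner_self_nonneg X)

theorem frobNorm_sq_of_idempotent_of_selfAdjoint
    (P : Matrix (Fin m) (Fin n) ℝ →ₗ[ℝ] Matrix (Fin m) (Fin n) ℝ)
    (hidem : ∀ X, P (P X) = P X) (hsa : ∀ X Y, frobInner (P X) Y = frobInner X (P Y))
    (Y : Matrix (Fin m) (Fin n) ℝ) :
    frobNorm (P Y) ^ 2 = frobInner (P Y) Y := by
  rw [frobNorm_sq, hsa, hidem, frobInner_comm]

end Frobenius

theorem rip_adjoint_projection_bound_general {m n p k : ℕ}
    (δ : ℝ)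
    (A : Matrix (Fin m) (Fin n) ℝ →ₗ[ℝ] EuclideanSpace ℝ (Fin p))
    (hRIP : ∀ X : Matrix (Fin m) (Fin n) ℝ, X.rank ≤ k →
      (1 - δ) * frobNorm X ^ 2 ≤ ‖A X‖ ^ 2 ∧ ‖A X‖ ^ 2 ≤ (1 + δ) * frobNorm X ^ 2)
    (Astar : EuclideanSpace ℝ (Fin p) →ₗ[ℝ] Matrix (Fin m) (Fin n) ℝ)
    (hadj : ∀ (X : Matrix (Fin m) (Fin n) ℝ) (v : EuclideanSpace ℝ (Fin p)),
      (inner ℝ (A X) v : ℝ) = frobInner X (Astar v))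
    (P : Matrix (Fin m) (Fin n) ℝ →ₗ[ℝ] Matrix (Fin m) (Fin n) ℝ)
    (hidem : ∀ X, P (P X) = P X)
    (hsa : ∀ X Y, frobInner (P X) Y = frobInner X (P Y))
    (hrank : ∀ X, (P X).rank ≤ k)
    (v : EuclideanSpace ℝ (Fin p)) :
    frobNorm (P (Astar v)) ≤ Real.sqrt (1 + δ) * ‖v‖ := by
  set Z := P (Astar v)
  have hAZ : ‖A Z‖ ≤ Real.sqrt (1 + δ) * frobNorm Z :=
    le_sqrt_mul_of_sq_le (frobNorm_nonneg Z) (hRIP Z (hrank _)).2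
  have hsq : frobNorm Z ^ 2 ≤ (Real.sqrt (1 + δ) * ‖v‖) * frobNorm Z :=
    calc frobNorm Z ^ 2 = ⟪A Z, v⟫ := by
          rw [hadj, frobNorm_sq_of_idempotent_of_selfAdjoint P hidem hsa]
      _ ≤ ‖A Z‖ * ‖v‖ := real_inner_le_norm _ _
      _ ≤ (Real.sqrt (1 + δ) * frobNorm Z) * ‖v‖ := by gcongr
      _ = (Real.sqrt (1 + δ) * ‖v‖) * frobNorm Z := by ring
  exact le_of_sq_le_mul (frobNorm_nonneg Z) (by positivity) hsq

/-- If `A` satisfies the rank-RIP with constant `δ ∈ (0,1)` at rank `k`, and `P_S`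
is the orthogonal projection onto the span of a set of orthonormal rank-one matrices
with `rank (P_S X) ≤ k` for all `X`, then `‖P_S (A* v)‖_F ≤ √(1+δ) ‖v‖` for all `v`. -/
theorem rip_adjoint_projection_bound {m n p k : ℕ}
    (δ : ℝ) (hδ : δ ∈ Set.Ioo (0 : ℝ) 1)
    (A : Matrix (Fin m) (Fin n) ℝ →ₗ[ℝ] EuclideanSpace ℝ (Fin p))
    (hRIP : ∀ X : Matrix (Fin m) (Fin n) ℝ, X.rank ≤ k →
      (1 - δ) * frobNorm X ^ 2 ≤ ‖A X‖ ^ 2 ∧ ‖A X‖ ^ 2 ≤ (1 + δ) * frobNorm X ^ 2)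
    (Astar : EuclideanSpace ℝ (Fin p) →ₗ[ℝ] Matrix (Fin m) (Fin n) ℝ)
    (hadj : ∀ (X : Matrix (Fin m) (Fin n) ℝ) (v : EuclideanSpace ℝ (Fin p)),
      (inner ℝ (A X) v : ℝ) = frobInner X (Astar v))
    (P : Matrix (Fin m) (Fin n) ℝ →ₗ[ℝ] Matrix (Fin m) (Fin n) ℝ)
    (hidem : ∀ X, P (P X) = P X)
    (hsa : ∀ X Y, frobInner (P X) Y = frobInner X (P Y))
    (hrank : ∀ X, (P X).rank ≤ k)
    (v : EuclideanSpace ℝ (Fin p)) :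
    frobNorm (P (Astar v)) ≤ Real.sqrt (1 + δ) * ‖v‖ :=
  rip_adjoint_projection_bound_general δ A hRIP Astar hadj P hidem hsa hrank v
end

section
/- Let A : ℝ^{m×n} → ℝ^p satisfy the rank-RIP with constant δ_k, and let S be a set of orthonormal rank-1 matrices with rank(P_S X) ≤ k for all X ∈ ℝ^{m×n}. Then for all X ∈ ℝ^{m×n}, (1−δ_k)‖P_S X‖_F ≤ ‖P_S A* A P_S X‖_F ≤ (1+δ_k)‖P_S X‖_F. -/
open scoped BigOperators

/-!
On the range `V` of `P`, the operator `T = P A* A P - P` is symmetric, and by the RIP its quadratic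
form satisfies `|⟪T z, z⟫| = |‖A z‖² - ‖z‖²| ≤ δ ‖z‖²`. For a symmetric operator, polarization turns
this bound on the quadratic form into the norm bound `‖T z‖ ≤ δ ‖z‖`, and the reverse triangle
inequality gives `|‖P A* A P X‖ - ‖P X‖| ≤ δ ‖P X‖`. The Frobenius inner product makes the space
of matrices a real inner product space in which this argument applies.
-/

open RealInnerProductSpace

namespace LinearMap.IsSymmetric

variable {E : Type*} [NormedAddCommGroup E] [InnerProductSpace ℝ E] {T : E →ₗ[ℝ] E} {c : ℝ}

theorem two_mul_inner_le_of_abs_inner_self_le (hT : T.IsSymmetric)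
    (hc : ∀ x, |⟪T x, x⟫| ≤ c * ‖x‖ ^ 2) (x y : E) :
    2 * ⟪T x, y⟫ ≤ c * (‖x‖ ^ 2 + ‖y‖ ^ 2) := by
  have polarization : ⟪T (x + y), x + y⟫ - ⟪T (x - y), x - y⟫ = 4 * ⟪T x, y⟫ := by
    simp only [map_add, map_sub, inner_add_left, inner_add_right, inner_sub_left,
      inner_sub_right, hT y x, real_inner_comm (T x) y]
    ring
  have hplus := (abs_le.mp (hc (x + y))).2
  have hminus := (abs_le.mp (hc (x - y))).1
  have parallelogram := congrArg (c * ·) (parallelogram_law_with_norm ℝ x y)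
  simp only [mul_add] at parallelogram
  linarith

theorem norm_apply_le_of_abs_inner_self_le (hT : T.IsSymmetric)
    (hc : ∀ x, |⟪T x, x⟫| ≤ c * ‖x‖ ^ 2) (x : E) : ‖T x‖ ≤ c * ‖x‖ := by
  rcases eq_or_ne x 0 with rfl | hx0
  · simp
  have hx : 0 < ‖x‖ := norm_pos_iff.mpr hx0
  have hc0 : 0 ≤ c := by
    have := (abs_nonneg _).trans (hc x)
    exact nonneg_of_mul_nonneg_left this (by positivity)
  rcases (norm_nonneg (T x)).eq_or_lt with hTx | hTx
  · rw [← hTx]; positivity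
  -- both test vectors have squared norm `‖T x‖² ‖x‖²`
  have key := two_mul_inner_le_of_abs_inner_self_le hT hc (‖T x‖ • x) (‖x‖ • T x)
  simp only [map_smul, real_inner_smul_left, real_inner_smul_right, norm_smul, norm_norm,
    real_inner_self_eq_norm_sq] at key
  have : ‖T x‖ ^ 2 * ‖x‖ * (‖T x‖ - c * ‖x‖) ≤ 0 := by nlinarith
  nlinarith [mul_pos (pow_pos hTx 2) hx]

end LinearMap.IsSymmetric

section Compression

variable {E F : Type*} [NormedAddCommGroup E] [InnerProductSpace ℝ E]
  [NormedAddCommGroup F] [InnerProductSpace ℝ F]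
  {A : E →ₗ[ℝ] F} {Astar : F →ₗ[ℝ] E} {P : E →ₗ[ℝ] E}

theorem inner_compression_apply (hadj : ∀ x v, ⟪A x, v⟫ = ⟪x, Astar v⟫) (hP : P.IsSymmetric)
    (x y : E) : ⟪P (Astar (A (P x))), y⟫ = ⟪A (P x), A (P y)⟫ := by
  rw [hP, real_inner_comm, ← hadj, real_inner_comm]

theorem isSymmetric_compression_sub (hadj : ∀ x v, ⟪A x, v⟫ = ⟪x, Astar v⟫)
    (hP : P.IsSymmetric) : (P ∘ₗ Astar ∘ₗ A ∘ₗ P - P).IsSymmetric := by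
  refine LinearMap.IsSymmetric.sub (fun x y => ?_) hP
  simp only [LinearMap.comp_apply]
  rw [inner_compression_apply hadj hP, real_inner_comm _ x, inner_compression_apply hadj hP,
    real_inner_comm]

theorem abs_norm_compression_sub_norm_le (hadj : ∀ x v, ⟪A x, v⟫ = ⟪x, Astar v⟫)
    (hP : P.IsSymmetric) (hidem : ∀ x, P (P x) = P x) {δ : ℝ}
    (hA : ∀ x, |‖A (P x)‖ ^ 2 - ‖P x‖ ^ 2| ≤ δ * ‖P x‖ ^ 2) (x : E) :
    |‖P (Astar (A (P x)))‖ - ‖P x‖| ≤ δ * ‖P x‖ := by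
  set T := P ∘ₗ Astar ∘ₗ A ∘ₗ P - P
  have hT : ∀ y, T y = P (Astar (A (P y)) - y) := fun y => by simp [T]
  have hV : ∀ v ∈ LinearMap.range P, T v ∈ LinearMap.range P := fun v _ => ⟨_, (hT v).symm⟩
  have hquad : ∀ v : LinearMap.range P, |⟪T.restrict hV v, v⟫| ≤ δ * ‖v‖ ^ 2 := by
    rintro ⟨_, y, rfl⟩
    simp only [Submodule.coe_inner, LinearMap.coe_restrict_apply, Submodule.coe_norm, T,
      LinearMap.sub_apply, LinearMap.comp_apply, inner_sub_left, inner_compression_apply hadj hP,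
      hidem, real_inner_self_eq_norm_sq]
    exact hA y
  have hnorm := ((isSymmetric_compression_sub hadj hP).restrict_invariant hV
    ).norm_apply_le_of_abs_inner_self_le hquad ⟨P x, x, rfl⟩
  simp only [Submodule.coe_norm, LinearMap.coe_restrict_apply, T, LinearMap.sub_apply,
    LinearMap.comp_apply, hidem] at hnorm
  exact (abs_norm_sub_norm_le _ _).trans hnorm

end Compression

noncomputable abbrev frobInnerCore (m n : ℕ) :
    InnerProductSpace.Core ℝ (Matrix (Fin m) (Fin n) ℝ) where
  inner := frobInner
  conj_inner_symm X Y := by simp [frobInner, mul_comm]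
  re_inner_nonneg X := by
    rw [RCLike.re_to_real]
    exact Finset.sum_nonneg fun i _ => Finset.sum_nonneg fun j _ => mul_self_nonneg (X i j)
  add_left X Y Z := by simp [frobInner, add_mul, Finset.sum_add_distrib]
  smul_left X Y r := by simp [frobInner, Finset.mul_sum, mul_assoc]
  definite X hX := by
    ext i j
    have hrow := (Finset.sum_eq_zero_iff_of_nonneg fun i _ =>
      Finset.sum_nonneg fun j _ => mul_self_nonneg (X i j)).mp hX i (Finset.mem_univ i)
    exact mul_self_eq_zero.mp <| (Finset.sum_eq_zero_iff_of_nonneg fun j _ =>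
      mul_self_nonneg (X i j)).mp hrow j (Finset.mem_univ j)

/-- If `A` satisfies rank-RIP with constant `δ` at rank `k` and `P_S` is the
orthogonal projection onto a subspace all of whose elements have rank at most `k`,
then `(1−δ)‖P_S X‖_F ≤ ‖P_S A* A P_S X‖_F ≤ (1+δ)‖P_S X‖_F` for all `X`. -/
theorem rip_projected_operator_bounds {m n p k : ℕ}
    (δ : ℝ)
    (A : Matrix (Fin m) (Fin n) ℝ →ₗ[ℝ] EuclideanSpace ℝ (Fin p))
    (hRIP : ∀ X : Matrix (Fin m) (Fin n) ℝ, X.rank ≤ k →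
      (1 - δ) * frobNorm X ^ 2 ≤ ‖A X‖ ^ 2 ∧ ‖A X‖ ^ 2 ≤ (1 + δ) * frobNorm X ^ 2)
    (Astar : EuclideanSpace ℝ (Fin p) →ₗ[ℝ] Matrix (Fin m) (Fin n) ℝ)
    (hadj : ∀ (X : Matrix (Fin m) (Fin n) ℝ) (v : EuclideanSpace ℝ (Fin p)),
      (inner ℝ (A X) v : ℝ) = frobInner X (Astar v))
    (P : Matrix (Fin m) (Fin n) ℝ →ₗ[ℝ] Matrix (Fin m) (Fin n) ℝ)
    (hidem : ∀ X, P (P X) = P X)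
    (hsa : ∀ X Y, frobInner (P X) Y = frobInner X (P Y))
    (hrank : ∀ X, (P X).rank ≤ k)
    (X : Matrix (Fin m) (Fin n) ℝ) :
    (1 - δ) * frobNorm (P X) ≤ frobNorm (P (Astar (A (P X)))) ∧
    frobNorm (P (Astar (A (P X)))) ≤ (1 + δ) * frobNorm (P X) := by
  let _ : NormedAddCommGroup (Matrix (Fin m) (Fin n) ℝ) :=
    (frobInnerCore m n).toNormedAddCommGroup
  let _ : InnerProductSpace ℝ (Matrix (Fin m) (Fin n) ℝ) := .ofCore (frobInnerCore m n).toCore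
  have hnorm (Y : Matrix (Fin m) (Fin n) ℝ) : frobNorm Y = ‖Y‖ := rfl
  have hRIP_range (Y : Matrix (Fin m) (Fin n) ℝ) :
      |‖A (P Y)‖ ^ 2 - ‖P Y‖ ^ 2| ≤ δ * ‖P Y‖ ^ 2 := by
    obtain ⟨hlower, hupper⟩ := hRIP (P Y) (hrank Y)
    rw [hnorm] at hlower hupper
    exact abs_sub_le_iff.mpr ⟨by linarith, by linarith⟩
  obtain ⟨hlower, hupper⟩ :=
    abs_le.mp (abs_norm_compression_sub_norm_le hadj hsa hidem hRIP_range X)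
  rw [hnorm, hnorm]
  constructor <;> linarith
end

section
/- Let A : ℝ^{m×n} → ℝ^p satisfy the rank-RIP with constant δ_k, let S be a set of orthonormal rank-1 matrices with rank(P_S X) ≤ k for all X, and let μ > 0. Then every eigenvalue of the self-adjoint operator μ P_S A* A P_S restricted to span(S) lies in [μ(1−δ_k), μ(1+δ_k)], and consequently for all X ∈ ℝ^{m×n}, ‖(I − μ P_S A* A P_S) P_S X‖_F ≤ max{μ(1+δ_k) − 1, 1 − μ(1−δ_k)} ‖P_S X‖_F. -/
open scoped BigOperators

/-!
On the range of the orthogonal projection `P`, the quadratic form of `T = P A* A P` is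
`x ↦ ‖A x‖²`, which the RIP pins between `(1 - δ)‖x‖²` and `(1 + δ)‖x‖²`; testing an eigenvector
against itself gives the eigenvalue bounds. For the contraction bound, `T - P` is symmetric with
`|⟪(T - P) x, x⟫| ≤ δ‖x‖²`, so its operator norm, the supremum of its Rayleigh quotient, is at
most `δ`. On the range of `P` we have `P - μT = (1 - μ)P - μ(T - P)`, of norm at most
`|1 - μ| + μδ = max (μ(1 + δ) - 1) (1 - μ(1 - δ))`.

Matrices are identified with `EuclideanSpace ℝ (Fin m × Fin n)`, where `frobInner` becomes the
inner product.
-/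

open scoped InnerProductSpace

variable {E F : Type*} [NormedAddCommGroup E] [InnerProductSpace ℝ E]
  [NormedAddCommGroup F] [InnerProductSpace ℝ F]

namespace LinearMap

theorem IsSymmetric.norm_apply_le_of_abs_inner_le [FiniteDimensional ℝ E] {T : E →ₗ[ℝ] E}
    (hT : T.IsSymmetric) {c : ℝ} (h : ∀ x, |⟪T x, x⟫_ℝ| ≤ c * ‖x‖ ^ 2) (x : E) :
    ‖T x‖ ≤ c * ‖x‖ := by
  rcases lt_or_ge c 0 with hc | hc
  · have hx : x = 0 := by
      have : ‖x‖ ^ 2 ≤ 0 := by nlinarith [(abs_nonneg _).trans (h x)]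
      simpa using this
    simp [hx]
  set T' := LinearMap.toContinuousLinearMap T
  have hT' : ‖T'‖ ≤ c := by
    rw [T'.norm_eq_iSup_rayleighQuotient hT]
    refine ciSup_le fun y => ?_
    rw [ContinuousLinearMap.rayleighQuotient, ContinuousLinearMap.reApplyInnerSelf_apply,
      abs_div, abs_sq]
    exact div_le_of_le_mul₀ (by positivity) hc (h y)
  calc ‖T x‖ = ‖T' x‖ := rfl
    _ ≤ ‖T'‖ * ‖x‖ := T'.le_opNorm x
    _ ≤ c * ‖x‖ := by gcongr

namespace IsSymmetricProjection

variable {P : E →ₗ[ℝ] E}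

theorem apply_apply (hP : P.IsSymmetricProjection) (x : E) : P (P x) = P x :=
  congrArg (· x) hP.isIdempotentElem

theorem inner_apply_self (hP : P.IsSymmetricProjection) (x : E) : ⟪P x, x⟫_ℝ = ‖P x‖ ^ 2 := by
  conv_lhs => rw [← hP.apply_apply]
  rw [hP.isSymmetric, real_inner_self_eq_norm_sq]

theorem norm_apply_le (hP : P.IsSymmetricProjection) (x : E) : ‖P x‖ ≤ ‖x‖ := by
  rcases eq_or_ne (P x) 0 with h | h
  · simp [h]
  have : ‖P x‖ ^ 2 ≤ ‖P x‖ * ‖x‖ := hP.inner_apply_self x ▸ real_inner_le_norm _ _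
  nlinarith [norm_pos_iff.mpr h]

end IsSymmetricProjection

end LinearMap

section RestrictedIsometry

def RestrictedIsometryOnRange (A : E →ₗ[ℝ] F) (P : E →ₗ[ℝ] E) (δ : ℝ) : Prop :=
  ∀ x, (1 - δ) * ‖P x‖ ^ 2 ≤ ‖A (P x)‖ ^ 2 ∧ ‖A (P x)‖ ^ 2 ≤ (1 + δ) * ‖P x‖ ^ 2

variable {A : E →ₗ[ℝ] F} {Astar : F →ₗ[ℝ] E} {P : E →ₗ[ℝ] E} {δ μ : ℝ}

theorem inner_comp_adjoint_comp_apply (hadj : ∀ x v, ⟪A x, v⟫_ℝ = ⟪x, Astar v⟫_ℝ)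
    (hP : P.IsSymmetric) (x y : E) :
    ⟪P (Astar (A (P x))), y⟫_ℝ = ⟪A (P x), A (P y)⟫_ℝ := by
  rw [hP, real_inner_comm, ← hadj, real_inner_comm]

theorem isSymmetric_comp_adjoint_comp (hadj : ∀ x v, ⟪A x, v⟫_ℝ = ⟪x, Astar v⟫_ℝ)
    (hP : P.IsSymmetric) : (P ∘ₗ Astar ∘ₗ A ∘ₗ P).IsSymmetric := fun x y => by
  simp only [LinearMap.comp_apply]
  rw [inner_comp_adjoint_comp_apply hadj hP, real_inner_comm,
    ← inner_comp_adjoint_comp_apply hadj hP, real_inner_comm]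

theorem eigenvalue_mem_Icc_of_restrictedIsometryOnRange (hμ : 0 < μ)
    (hadj : ∀ x v, ⟪A x, v⟫_ℝ = ⟪x, Astar v⟫_ℝ) (hP : P.IsSymmetric)
    (hRIP : RestrictedIsometryOnRange A P δ) {lam : ℝ} {x : E} (hx : x ≠ 0) (hPx : P x = x)
    (heig : μ • P (Astar (A (P x))) = lam • x) :
    lam ∈ Set.Icc (μ * (1 - δ)) (μ * (1 + δ)) := by
  have hquad : lam * ‖x‖ ^ 2 = μ * ‖A x‖ ^ 2 := by
    have := congrArg (⟪·, x⟫_ℝ) heig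
    simp only [real_inner_smul_left] at this
    rw [inner_comp_adjoint_comp_apply hadj hP, hPx, real_inner_self_eq_norm_sq,
      real_inner_self_eq_norm_sq] at this
    exact this.symm
  have hxpos : 0 < ‖x‖ ^ 2 := by positivity
  obtain ⟨hlo, hhi⟩ := hPx ▸ hRIP x
  constructor <;> nlinarith [mul_le_mul_of_nonneg_left hlo hμ.le,
    mul_le_mul_of_nonneg_left hhi hμ.le]

theorem norm_comp_adjoint_comp_sub_apply_le [FiniteDimensional ℝ E]
    (hadj : ∀ x v, ⟪A x, v⟫_ℝ = ⟪x, Astar v⟫_ℝ) (hP : P.IsSymmetricProjection)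
    (hRIP : RestrictedIsometryOnRange A P δ) (hδ : 0 ≤ δ) (x : E) :
    ‖(P ∘ₗ Astar ∘ₗ A ∘ₗ P - P) x‖ ≤ δ * ‖x‖ := by
  refine ((isSymmetric_comp_adjoint_comp hadj hP.isSymmetric).sub hP.isSymmetric)
    |>.norm_apply_le_of_abs_inner_le (fun z => ?_) x
  have hquad : ⟪(P ∘ₗ Astar ∘ₗ A ∘ₗ P - P) z, z⟫_ℝ = ‖A (P z)‖ ^ 2 - ‖P z‖ ^ 2 := by
    rw [LinearMap.sub_apply, inner_sub_left, LinearMap.comp_apply, LinearMap.comp_apply, LinearMap.comp_apply,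
      inner_comp_adjoint_comp_apply hadj hP.isSymmetric, real_inner_self_eq_norm_sq,
      hP.inner_apply_self]
  obtain ⟨hlo, hhi⟩ := hRIP z
  have hPz : ‖P z‖ ^ 2 ≤ ‖z‖ ^ 2 := by gcongr; exact hP.norm_apply_le z
  rw [hquad, abs_le]
  constructor <;> nlinarith

theorem norm_sub_smul_comp_adjoint_comp_le [FiniteDimensional ℝ E] (hμ : 0 < μ)
    (hadj : ∀ x v, ⟪A x, v⟫_ℝ = ⟪x, Astar v⟫_ℝ) (hP : P.IsSymmetricProjection)
    (hRIP : RestrictedIsometryOnRange A P δ) (x : E) :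
    ‖P x - μ • P (Astar (A (P x)))‖ ≤ max (μ * (1 + δ) - 1) (1 - μ * (1 - δ)) * ‖P x‖ := by
  rcases eq_or_ne (P x) 0 with h0 | h0
  · simp [h0]
  have hδ : 0 ≤ δ := by
    obtain ⟨hlo, hhi⟩ := hRIP x
    nlinarith [pow_pos (norm_pos_iff.mpr h0) 2]
  set B := P ∘ₗ Astar ∘ₗ A ∘ₗ P - P
  have hB : ‖B (P x)‖ ≤ δ * ‖P x‖ := norm_comp_adjoint_comp_sub_apply_le hadj hP hRIP hδ (P x)
  have hsplit : P x - μ • P (Astar (A (P x))) = (1 - μ) • P x - μ • B (P x) := by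
    simp only [B, LinearMap.sub_apply, LinearMap.comp_apply, hP.apply_apply]
    module
  have hmax : |1 - μ| + μ * δ = max (μ * (1 + δ) - 1) (1 - μ * (1 - δ)) := by
    rw [abs_sub_comm, abs_eq_max_neg, ← max_add_add_right]
    congr 1 <;> ring
  calc ‖P x - μ • P (Astar (A (P x)))‖
      ≤ ‖(1 - μ) • P x‖ + ‖μ • B (P x)‖ := hsplit ▸ norm_sub_le _ _
    _ ≤ |1 - μ| * ‖P x‖ + μ * (δ * ‖P x‖) := by
      rw [norm_smul, norm_smul, Real.norm_eq_abs, Real.norm_of_nonneg hμ.le]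
      gcongr
    _ = max (μ * (1 + δ) - 1) (1 - μ * (1 - δ)) * ‖P x‖ := by rw [← hmax]; ring

end RestrictedIsometry

noncomputable def frobEquiv (m n : ℕ) :
    Matrix (Fin m) (Fin n) ℝ ≃ₗ[ℝ] EuclideanSpace ℝ (Fin m × Fin n) :=
  (Matrix.ofLinearEquiv ℝ).symm ≪≫ₗ (LinearEquiv.curry ℝ ℝ (Fin m) (Fin n)).symm ≪≫ₗ
    (WithLp.linearEquiv 2 ℝ (Fin m × Fin n → ℝ)).symm

theorem frobInner_eq_inner {m n : ℕ} (X Y : Matrix (Fin m) (Fin n) ℝ) :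
    frobInner X Y = ⟪frobEquiv m n X, frobEquiv m n Y⟫_ℝ := by
  simp [frobInner, frobEquiv, PiLp.inner_apply, Fintype.sum_prod_type, mul_comm]

theorem frobNorm_eq_norm {m n : ℕ} (X : Matrix (Fin m) (Fin n) ℝ) :
    frobNorm X = ‖frobEquiv m n X‖ := by
  rw [frobNorm, frobInner_eq_inner, real_inner_self_eq_norm_sq, Real.sqrt_sq (norm_nonneg _)]

/-- Eigenvalues of `μ P_S A* A P_S` restricted to `span(S)` lie in
`[μ(1−δ_k), μ(1+δ_k)]`, and consequently
`‖(I − μ P_S A* A P_S) P_S X‖_F ≤ max{μ(1+δ)−1, 1−μ(1−δ)} ‖P_S X‖_F`. -/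
theorem rip_projected_eigenvalue_bounds {m n p k : ℕ}
    (δ μ : ℝ) (hμ : 0 < μ)
    (A : Matrix (Fin m) (Fin n) ℝ →ₗ[ℝ] EuclideanSpace ℝ (Fin p))
    (hRIP : ∀ X : Matrix (Fin m) (Fin n) ℝ, X.rank ≤ k →
      (1 - δ) * frobNorm X ^ 2 ≤ ‖A X‖ ^ 2 ∧ ‖A X‖ ^ 2 ≤ (1 + δ) * frobNorm X ^ 2)
    (Astar : EuclideanSpace ℝ (Fin p) →ₗ[ℝ] Matrix (Fin m) (Fin n) ℝ)
    (hadj : ∀ (X : Matrix (Fin m) (Fin n) ℝ) (v : EuclideanSpace ℝ (Fin p)),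
      (inner ℝ (A X) v : ℝ) = frobInner X (Astar v))
    (P : Matrix (Fin m) (Fin n) ℝ →ₗ[ℝ] Matrix (Fin m) (Fin n) ℝ)
    (hidem : ∀ X, P (P X) = P X)
    (hsa : ∀ X Y, frobInner (P X) Y = frobInner X (P Y))
    (hrank : ∀ X, (P X).rank ≤ k) :
    (∀ (lam : ℝ) (X : Matrix (Fin m) (Fin n) ℝ), X ≠ 0 → P X = X →
      μ • P (Astar (A (P X))) = lam • X →
      lam ∈ Set.Icc (μ * (1 - δ)) (μ * (1 + δ))) ∧
    (∀ X : Matrix (Fin m) (Fin n) ℝ,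
      frobNorm (P X - μ • P (Astar (A (P X)))) ≤
        max (μ * (1 + δ) - 1) (1 - μ * (1 - δ)) * frobNorm (P X)) := by
  set e := frobEquiv m n with he
  have hadj' : ∀ x v, ⟪(A ∘ₗ e.symm.toLinearMap) x, v⟫_ℝ = ⟪x, (e.toLinearMap ∘ₗ Astar) v⟫_ℝ :=
    fun x v => by simpa [frobInner_eq_inner, ← he] using hadj (e.symm x) v
  have hP' : (e.conj P).IsSymmetricProjection :=
    { isIdempotentElem := LinearMap.ext fun x => by simp [LinearEquiv.conj_apply, hidem]
      isSymmetric := fun x y => by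
        simpa [LinearEquiv.conj_apply, frobInner_eq_inner, ← he] using hsa (e.symm x) (e.symm y) }
  have hRIP' : RestrictedIsometryOnRange (A ∘ₗ e.symm.toLinearMap) (e.conj P) δ := fun x => by
    simpa [LinearEquiv.conj_apply, frobNorm_eq_norm, ← he] using hRIP _ (hrank (e.symm x))
  refine ⟨fun lam X hX hPX heig => ?_, fun X => ?_⟩
  · refine eigenvalue_mem_Icc_of_restrictedIsometryOnRange hμ hadj' hP'.isSymmetric hRIP'
      (x := e X) (by simpa using hX) (by simpa [LinearEquiv.conj_apply] using hPX) ?_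
    simpa [LinearEquiv.conj_apply] using congrArg e heig
  · simpa [LinearEquiv.conj_apply, frobNorm_eq_norm, ← he] using
      norm_sub_smul_comp_adjoint_comp_le hμ hadj' hP' hRIP' (e X)
end

section
/- Let X ∈ ℝ^{m×n} have SVD X = UΣVᵀ and let P_k(X) = U_k Σ_k V_kᵀ be a truncated SVD keeping the k largest singular values (k < rank(X)). Then for every matrix W ∈ ℝ^{m×n} with rank(W) ≤ k, ‖P_k(X) − X‖_F ≤ ‖W − X‖_F. -/
open scoped BigOperators

/-!
Orthogonal invariance of the Frobenius norm reduces the claim to `X = S` diagonal, with `W`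
replaced by `Uᵀ W V`, whose rank is still at most `k`. Let `P` be the orthogonal projection
onto the column space `K` of `W`. Column by column, `‖W - S‖² ≥ ‖S - P S‖² = ‖S‖² - ∑ σⱼ² tⱼ`
with `tⱼ = ‖P eⱼ‖²`. These weights lie in `[0, 1]` and, by Bessel's inequality in an orthonormal
basis of `K`, sum to at most `dim K ≤ k`. As `σⱼ²` is decreasing, `∑ σⱼ² tⱼ ≤ ∑_{j<k} σⱼ²`, and
`‖S‖² - ∑_{j<k} σⱼ²` is exactly `‖Sₖ - S‖²`.
-/

open Finset Matrix Module

section Projection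

variable {𝕜 E ι : Type*} [RCLike 𝕜] [NormedAddCommGroup E] [InnerProductSpace 𝕜 E]

theorem Submodule.norm_sq_sub_norm_sq_starProjection_le (K : Submodule 𝕜 E)
    [K.HasOrthogonalProjection] (y : E) {w : E} (hw : w ∈ K) :
    ‖y‖ ^ 2 - ‖K.starProjection y‖ ^ 2 ≤ ‖w - y‖ ^ 2 := by
  have hpyth := K.norm_sq_eq_add_norm_sq_starProjection y
  rw [Submodule.starProjection_orthogonal_val] at hpyth
  have hmin : ‖y - K.starProjection y‖ ≤ ‖y - w‖ := by
    rw [Submodule.starProjection_minimal]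
    exact ciInf_le ⟨0, Set.forall_mem_range.2 fun _ => norm_nonneg _⟩ (⟨w, hw⟩ : K)
  rw [norm_sub_rev w]
  nlinarith [norm_nonneg (y - K.starProjection y)]

theorem Submodule.sum_norm_sq_starProjection_le_finrank (K : Submodule 𝕜 E)
    [FiniteDimensional 𝕜 K] {v : ι → E} {s : Finset ι}
    (hv : ∀ x, ∑ i ∈ s, ‖inner 𝕜 (v i) x‖ ^ 2 ≤ ‖x‖ ^ 2) :
    ∑ i ∈ s, ‖K.starProjection (v i)‖ ^ 2 ≤ finrank 𝕜 K := by
  let b := stdOrthonormalBasis 𝕜 K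
  have hparseval : ∀ x, ‖K.starProjection x‖ ^ 2 = ∑ r, ‖inner 𝕜 x (b r : E)‖ ^ 2 := fun x => by
    rw [K.starProjection_apply, ← Submodule.coe_norm, ← b.sum_sq_norm_inner_right]
    simp only [Submodule.inner_orthogonalProjectionOnto_eq_of_mem_left, norm_inner_symm]
  calc ∑ i ∈ s, ‖K.starProjection (v i)‖ ^ 2
      = ∑ r, ∑ i ∈ s, ‖inner 𝕜 (v i) (b r : E)‖ ^ 2 := by
        simp only [hparseval]
        exact sum_comm
    _ ≤ ∑ r, ‖(b r : E)‖ ^ 2 := sum_le_sum fun r _ => hv _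
    _ = finrank 𝕜 K := by simp [Submodule.norm_coe, b.orthonormal.1]

end Projection

theorem sum_mul_le_sum_range_of_antitone {a t : ℕ → ℝ} {N k : ℕ} (hkN : k ≤ N)
    (ha : Antitone a) (ha0 : ∀ i, 0 ≤ a i) (ht0 : ∀ i, 0 ≤ t i) (ht1 : ∀ i, t i ≤ 1)
    (hsum : ∑ i ∈ range N, t i ≤ k) :
    ∑ i ∈ range N, a i * t i ≤ ∑ i ∈ range k, a i := by
  have hterm : ∀ i, a i * t i ≤ a k * t i + if i < k then a i - a k else 0 := fun i => by
    split_ifs with hik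
    · nlinarith [ha hik.le, ht1 i]
    · nlinarith [ha (not_lt.1 hik), ht0 i]
  have hhead : ∑ i ∈ range N, (if i < k then a i - a k else 0) = ∑ i ∈ range k, (a i - a k) := by
    rw [← sum_filter]
    congr 1
    ext i
    simp only [mem_filter, mem_range]
    omega
  calc ∑ i ∈ range N, a i * t i
      ≤ ∑ i ∈ range N, (a k * t i + if i < k then a i - a k else 0) :=
        sum_le_sum fun i _ => hterm i
    _ = a k * ∑ i ∈ range N, t i + (∑ i ∈ range k, a i - k * a k) := by
        rw [sum_add_distrib, ← mul_sum, hhead, sum_sub_distrib]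
        simp
    _ ≤ ∑ i ∈ range k, a i := by nlinarith [ha0 k]

section Frobenius

variable {m n : ℕ}

noncomputable def colVec (A : Matrix (Fin m) (Fin n) ℝ) (j : Fin n) : EuclideanSpace ℝ (Fin m) :=
  WithLp.toLp 2 (Aᵀ j)

theorem colVec_sub (A B : Matrix (Fin m) (Fin n) ℝ) (j : Fin n) :
    colVec (A - B) j = colVec A j - colVec B j := rfl

theorem finrank_span_colVec (A : Matrix (Fin m) (Fin n) ℝ) :
    finrank ℝ (Submodule.span ℝ (Set.range (colVec A))) = A.rank := by
  rw [rank_eq_finrank_span_cols,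
    ← LinearEquiv.finrank_map_eq (WithLp.linearEquiv 2 ℝ (Fin m → ℝ)), Submodule.map_span,
    ← Set.range_comp]
  rfl

theorem frobInner_self_eq_sum_norm_sq_colVec (A : Matrix (Fin m) (Fin n) ℝ) :
    frobInner A A = ∑ j, ‖colVec A j‖ ^ 2 := by
  rw [frobInner, sum_comm]
  refine sum_congr rfl fun j _ => ?_
  rw [EuclideanSpace.norm_sq_eq]
  simp [colVec, sq]

theorem frobInner_eq_trace (A B : Matrix (Fin m) (Fin n) ℝ) :
    frobInner A B = (Aᵀ * B).trace := by
  simp only [frobInner, trace, Matrix.diag, mul_apply, transpose_apply]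
  exact sum_comm

theorem frobNorm_mul_mul_transpose {U : Matrix (Fin m) (Fin m) ℝ} {V : Matrix (Fin n) (Fin n) ℝ}
    (hU : Uᵀ * U = 1) (hV : Vᵀ * V = 1) (A : Matrix (Fin m) (Fin n) ℝ) :
    frobNorm (U * A * Vᵀ) = frobNorm A := by
  have hgram : (U * A * Vᵀ)ᵀ * (U * A * Vᵀ) = V * (Aᵀ * A) * Vᵀ := by
    simp only [transpose_mul, transpose_transpose, Matrix.mul_assoc]
    rw [← Matrix.mul_assoc Uᵀ, hU, Matrix.one_mul]
  rw [frobNorm, frobNorm, frobInner_eq_trace, frobInner_eq_trace, hgram, trace_mul_comm,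
    ← Matrix.mul_assoc, hV, Matrix.one_mul]

end Frobenius

/-- Zero when `m ≤ ℓ`, so that the `ℓ`-th column of a rectangular diagonal matrix is
`σ ℓ • stdVec m ℓ` for every `ℓ`. -/
noncomputable def stdVec (m ℓ : ℕ) : EuclideanSpace ℝ (Fin m) :=
  if h : ℓ < m then EuclideanSpace.single ⟨ℓ, h⟩ 1 else 0

theorem stdVec_of_le {m ℓ : ℕ} (h : m ≤ ℓ) : stdVec m ℓ = 0 := dif_neg (not_lt.2 h)

theorem norm_stdVec_of_lt {m ℓ : ℕ} (h : ℓ < m) : ‖stdVec m ℓ‖ = 1 := by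
  simp [stdVec, h]

theorem norm_stdVec_le_one (m ℓ : ℕ) : ‖stdVec m ℓ‖ ≤ 1 := by
  rcases lt_or_ge ℓ m with h | h
  · exact (norm_stdVec_of_lt h).le
  · simp [stdVec_of_le h]

theorem sum_range_norm_inner_stdVec_sq_le {m : ℕ} (N : ℕ) (x : EuclideanSpace ℝ (Fin m)) :
    ∑ ℓ ∈ range N, ‖inner ℝ (stdVec m ℓ) x‖ ^ 2 ≤ ‖x‖ ^ 2 := by
  let g : ℕ → ℝ := fun ℓ => ‖inner ℝ (stdVec m ℓ) x‖ ^ 2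
  calc ∑ ℓ ∈ range N, g ℓ
      ≤ ∑ ℓ ∈ range (m + N), g ℓ :=
        sum_le_sum_of_subset_of_nonneg (range_subset_range.2 (Nat.le_add_left N m))
          fun _ _ _ => sq_nonneg _
    _ = ∑ ℓ ∈ range m, g ℓ := by
        simp [sum_range_add, g, stdVec_of_le (Nat.le_add_right m _)]
    _ = ∑ i : Fin m, ‖inner ℝ (EuclideanSpace.basisFun (Fin m) ℝ i) x‖ ^ 2 := by
        rw [← Fin.sum_univ_eq_sum_range]
        simp [g, stdVec]
    _ = ‖x‖ ^ 2 := OrthonormalBasis.sum_sq_norm_inner_right _ x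

section Diagonal

variable {m n k : ℕ} {σ : ℕ → ℝ} {S : Matrix (Fin m) (Fin n) ℝ}

theorem colVec_diagonal (hS : ∀ i j, S i j = if (i : ℕ) = (j : ℕ) then σ (i : ℕ) else 0)
    (j : Fin n) : colVec S j = σ j • stdVec m j := by
  ext i
  by_cases hij : (i : ℕ) = j
  · have hj : (j : ℕ) < m := hij ▸ i.isLt
    simp [colVec, stdVec, hS, hij, hj, Fin.ext_iff]
  · unfold stdVec
    split_ifs <;> simp [colVec, hS, hij, Fin.ext_iff]

theorem frobInner_self_truncation_sub (hkm : k ≤ m) (hkn : k ≤ n) {Sk : Matrix (Fin m) (Fin n) ℝ}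
    (hS : ∀ i j, S i j = if (i : ℕ) = (j : ℕ) then σ (i : ℕ) else 0)
    (hSk : ∀ i j, Sk i j = if (i : ℕ) = (j : ℕ) ∧ (i : ℕ) < k then σ (i : ℕ) else 0) :
    frobInner (Sk - S) (Sk - S) = frobInner S S - ∑ ℓ ∈ range k, σ ℓ ^ 2 := by
  have hcolSk : ∀ j, colVec Sk j = (if (j : ℕ) < k then σ j else 0) • stdVec m j :=
    colVec_diagonal (σ := fun i => if i < k then σ i else 0) fun i j => by rw [hSk, ite_and]
  have hcol : ∀ j, ‖colVec (Sk - S) j‖ ^ 2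
      = ‖colVec S j‖ ^ 2 - if (j : ℕ) < k then σ j ^ 2 else 0 := fun j => by
    rw [colVec_sub, hcolSk, colVec_diagonal hS, ← sub_smul, norm_smul, norm_smul]
    split_ifs with hj
    · simp [norm_stdVec_of_lt (hj.trans_le hkm)]
    · simp
  have hhead : ∑ j : Fin n, (if (j : ℕ) < k then σ j ^ 2 else 0) = ∑ ℓ ∈ range k, σ ℓ ^ 2 := by
    rw [Fin.sum_univ_eq_sum_range (fun ℓ => if ℓ < k then σ ℓ ^ 2 else 0), ← sum_filter]
    congr 1
    ext i
    simp only [mem_filter, mem_range]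
    omega
  simp only [frobInner_self_eq_sum_norm_sq_colVec, hcol, sum_sub_distrib, hhead]

theorem sum_norm_sq_starProjection_colVec_diagonal_le (hσ : Antitone σ) (hσ0 : ∀ i, 0 ≤ σ i)
    (hkn : k ≤ n) (hS : ∀ i j, S i j = if (i : ℕ) = (j : ℕ) then σ (i : ℕ) else 0)
    (K : Submodule ℝ (EuclideanSpace ℝ (Fin m))) (hK : finrank ℝ K ≤ k) :
    ∑ j, ‖K.starProjection (colVec S j)‖ ^ 2 ≤ ∑ ℓ ∈ range k, σ ℓ ^ 2 := by
  let t : ℕ → ℝ := fun ℓ => ‖K.starProjection (stdVec m ℓ)‖ ^ 2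
  have ht1 : ∀ ℓ, t ℓ ≤ 1 := fun ℓ =>
    pow_le_one₀ (norm_nonneg _) ((K.norm_starProjection_apply_le _).trans (norm_stdVec_le_one m ℓ))
  have hsum : ∑ ℓ ∈ range n, t ℓ ≤ k :=
    (K.sum_norm_sq_starProjection_le_finrank (sum_range_norm_inner_stdVec_sq_le n)).trans
      (by exact_mod_cast hK)
  calc ∑ j, ‖K.starProjection (colVec S j)‖ ^ 2 = ∑ ℓ ∈ range n, σ ℓ ^ 2 * t ℓ := by
        rw [← Fin.sum_univ_eq_sum_range]
        simp [colVec_diagonal hS, t, norm_smul, mul_pow]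
    _ ≤ ∑ ℓ ∈ range k, σ ℓ ^ 2 :=
        sum_mul_le_sum_range_of_antitone hkn (fun _ j hij => pow_le_pow_left₀ (hσ0 j) (hσ hij) 2)
          (fun _ => sq_nonneg _) (fun _ => sq_nonneg _) ht1 hsum

theorem frobNorm_truncation_sub_le_of_rank_le (hσ : Antitone σ) (hσ0 : ∀ i, 0 ≤ σ i)
    (hkm : k ≤ m) (hkn : k ≤ n) {Sk W : Matrix (Fin m) (Fin n) ℝ}
    (hS : ∀ i j, S i j = if (i : ℕ) = (j : ℕ) then σ (i : ℕ) else 0)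
    (hSk : ∀ i j, Sk i j = if (i : ℕ) = (j : ℕ) ∧ (i : ℕ) < k then σ (i : ℕ) else 0)
    (hW : W.rank ≤ k) :
    frobNorm (Sk - S) ≤ frobNorm (W - S) := by
  let K := Submodule.span ℝ (Set.range (colVec W))
  have hK : finrank ℝ K ≤ k := (finrank_span_colVec W).trans_le hW
  have hbest : ∀ j, ‖colVec S j‖ ^ 2 - ‖K.starProjection (colVec S j)‖ ^ 2
      ≤ ‖colVec (W - S) j‖ ^ 2 := fun j => by
    rw [colVec_sub]
    exact K.norm_sq_sub_norm_sq_starProjection_le _ (Submodule.subset_span ⟨j, rfl⟩)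
  apply Real.sqrt_le_sqrt
  calc frobInner (Sk - S) (Sk - S) = frobInner S S - ∑ ℓ ∈ range k, σ ℓ ^ 2 :=
        frobInner_self_truncation_sub hkm hkn hS hSk
    _ ≤ ∑ j, (‖colVec S j‖ ^ 2 - ‖K.starProjection (colVec S j)‖ ^ 2) := by
        rw [sum_sub_distrib, ← frobInner_self_eq_sum_norm_sq_colVec]
        linarith [sum_norm_sq_starProjection_colVec_diagonal_le hσ hσ0 hkn hS K hK]
    _ ≤ frobInner (W - S) (W - S) := by
        rw [frobInner_self_eq_sum_norm_sq_colVec]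
        exact sum_le_sum fun j _ => hbest j

end Diagonal

/-- Eckart–Young: the truncated SVD `U_k Σ_k V_kᵀ` (keeping the `k` largest
singular values, `k < rank X`) is a best rank-`k` approximation of `X` in
the Frobenius norm. -/
theorem eckart_young_frobenius {m n k : ℕ}
    (X : Matrix (Fin m) (Fin n) ℝ)
    (U : Matrix (Fin m) (Fin m) ℝ) (V : Matrix (Fin n) (Fin n) ℝ)
    (σ : ℕ → ℝ)
    (hU : U * U.transpose = 1) (hV : V * V.transpose = 1)
    (hσmono : Antitone σ) (hσnonneg : ∀ i, 0 ≤ σ i)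
    (S : Matrix (Fin m) (Fin n) ℝ)
    (hS : ∀ i j, S i j = if (i : ℕ) = (j : ℕ) then σ (i : ℕ) else 0)
    (hX : X = U * S * V.transpose)
    (hk : k < X.rank)
    (Sk : Matrix (Fin m) (Fin n) ℝ)
    (hSk : ∀ i j, Sk i j = if (i : ℕ) = (j : ℕ) ∧ (i : ℕ) < k then σ (i : ℕ) else 0) :
    ∀ W : Matrix (Fin m) (Fin n) ℝ, W.rank ≤ k →
      frobNorm (U * Sk * V.transpose - X) ≤ frobNorm (W - X) := by
  intro W hW
  have hU' : Uᵀ * U = 1 := mul_eq_one_comm.mp hU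
  have hV' : Vᵀ * V = 1 := mul_eq_one_comm.mp hV
  have hlhs : U * Sk * Vᵀ - X = U * (Sk - S) * Vᵀ := by
    rw [hX, Matrix.mul_sub, Matrix.sub_mul]
  have hrhs : W - X = U * (Uᵀ * W * V - S) * Vᵀ := by
    simp only [hX, Matrix.mul_sub, Matrix.sub_mul, Matrix.mul_assoc, hV, Matrix.mul_one]
    rw [← Matrix.mul_assoc U Uᵀ W, hU, Matrix.one_mul]
  have hW' : (Uᵀ * W * V).rank ≤ k :=
    ((rank_mul_le_left _ _).trans (rank_mul_le_right _ _)).trans hW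
  rw [hlhs, hrhs, frobNorm_mul_mul_transpose hU' hV', frobNorm_mul_mul_transpose hU' hV']
  exact frobNorm_truncation_sub_le_of_rank_le hσmono hσnonneg
    (hk.le.trans (rank_le_height X)) (hk.le.trans (rank_le_width X)) hS hSk hW'
end
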